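/- Approximation identity for the Ostrowski expansion: for irrational x ∈ (0,1), y ∈ [0,1), digits (a_i,b_i) from the Ostrowski map, and M_n = ∑_{i=1}^n b_i (−1)^{i−1} q_{i−1}, one has y − ∑_{i=1}^n b_i|θ_{i−1}| = y_n |θ_{n−1}|, where (x_n,y_n) = S^n(x,y); in particular 0 ≤ y − ∑_{i=1}^n b_i|θ_{i−1}| < 1/q_n. -/

import Mathlib

open scoped BigOperators

/-- The Gauss map `x ↦ {1/x}` (with `T 0 = 0`). -/
noncomputable def gauss (x : ℝ) : ℝ := Int.fract (1 / x)

/-- `cf x n = (p_{n-1}, q_{n-1})`, the continued fraction convergents of `x`,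
with `p_{-1} = 1, q_{-1} = 0, p_0 = 0, q_0 = 1`,
`p_{k+1} = a_{k+1} p_k + p_{k-1}`, `q_{k+1} = a_{k+1} q_k + q_{k-1}`,
where `a_{k+1} = ⌊1 / T^k x⌋`. -/
noncomputable def cf (x : ℝ) : ℕ → ℤ × ℤ
  | 0 => (1, 0)
  | 1 => (0, 1)
  | n + 2 => (⌊1 / gauss^[n] x⌋ * (cf x (n + 1)).1 + (cf x n).1,
              ⌊1 / gauss^[n] x⌋ * (cf x (n + 1)).2 + (cf x n).2)

/-- `pcf x n = p_{n-1}`. -/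
noncomputable def pcf (x : ℝ) (n : ℕ) : ℤ := (cf x n).1

/-- `qcf x n = q_{n-1}`. -/
noncomputable def qcf (x : ℝ) (n : ℕ) : ℤ := (cf x n).2

/-- `acf x i = a_i = ⌊1 / T^{i-1} x⌋`, the `i`-th partial quotient (for `i ≥ 1`). -/
noncomputable def acf (x : ℝ) (i : ℕ) : ℤ := ⌊1 / gauss^[i - 1] x⌋

/-- `absθ x n = |θ_{n-1}| = |q_{n-1} x - p_{n-1}|` (so `absθ x 0 = 1`, `absθ x 1 = |x|`). -/
noncomputable def absθ (x : ℝ) (n : ℕ) : ℝ := |(qcf x n : ℝ) * x - (pcf x n : ℝ)|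

/-- The Ostrowski map `S(x,y) = ({1/x}, {y/x})`, with `S(0,y) = (0,0)`. -/
noncomputable def ost (p : ℝ × ℝ) : ℝ × ℝ :=
  if p.1 = 0 then (0, 0) else (Int.fract (1 / p.1), Int.fract (p.2 / p.1))

/-- `adig x y n = a_{n+1} = ⌊1 / x_n⌋` where `(x_n, y_n) = S^n (x,y)`. -/
noncomputable def adig (x y : ℝ) (n : ℕ) : ℤ := ⌊1 / (ost^[n] (x, y)).1⌋

/-- `bdig x y n = b_{n+1} = ⌊y_n / x_n⌋` where `(x_n, y_n) = S^n (x,y)`. -/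
noncomputable def bdig (x y : ℝ) (n : ℕ) : ℤ := ⌊(ost^[n] (x, y)).2 / (ost^[n] (x, y)).1⌋

/-! The `n`-th remainder `y - ∑ bᵢ|θᵢ₋₁|` equals `yₙ|θₙ₋₁|`: one step of the Ostrowski map
replaces `yₙ` by `yₙ/xₙ - bₙ₊₁` while `|θₙ| = xₙ|θₙ₋₁|`, so the remainder drops by exactly
`bₙ₊₁|θₙ|`. The bound then follows from `0 ≤ yₙ < 1` and `|θₙ₋₁| = 1/(qₙ + xₙqₙ₋₁) ≤ 1/qₙ`. -/

open Set

lemma irrational_gauss {x : ℝ} (h : Irrational x) : Irrational (gauss x) := by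
  rw [gauss, Int.fract, one_div]
  exact h.inv.sub_intCast _

lemma irrational_iterate_gauss {x : ℝ} (h : Irrational x) (n : ℕ) :
    Irrational (gauss^[n] x) := by
  induction n with
  | zero => exact h
  | succ n ih => rw [Function.iterate_succ_apply']; exact irrational_gauss ih

lemma iterate_gauss_pos {x : ℝ} (h : Irrational x) (hx : 0 < x) (n : ℕ) :
    0 < gauss^[n] x := by
  cases n with
  | zero => exact hx
  | succ n =>
    rw [Function.iterate_succ_apply']
    exact (Int.fract_nonneg _).lt_of_ne' (irrational_gauss (irrational_iterate_gauss h n)).ne_zero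

lemma iterate_gauss_lt_one {x : ℝ} (hx : x < 1) (n : ℕ) : gauss^[n] x < 1 := by
  cases n with
  | zero => exact hx
  | succ n => rw [Function.iterate_succ_apply']; exact Int.fract_lt_one _

lemma acf_succ (x : ℝ) (n : ℕ) : acf x (n + 1) = ⌊1 / gauss^[n] x⌋ := rfl

lemma one_le_acf_succ {x : ℝ} (h : Irrational x) (hx0 : 0 < x) (hx1 : x < 1) (n : ℕ) :
    1 ≤ acf x (n + 1) := by
  have hpos := iterate_gauss_pos h hx0 n
  rw [acf_succ, Int.le_floor, Int.cast_one, le_div_iff₀ hpos, one_mul]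
  exact (iterate_gauss_lt_one hx1 n).le

lemma qcf_add_two (x : ℝ) (n : ℕ) :
    qcf x (n + 2) = acf x (n + 1) * qcf x (n + 1) + qcf x n := rfl

lemma qcf_nonneg_and_one_le_qcf_succ {x : ℝ} (h : Irrational x) (hx0 : 0 < x) (hx1 : x < 1)
    (n : ℕ) : (0 : ℝ) ≤ qcf x n ∧ (1 : ℝ) ≤ qcf x (n + 1) := by
  induction n with
  | zero => simp [qcf, cf]
  | succ n ih =>
    have ha : (1 : ℝ) ≤ acf x (n + 1) := by exact_mod_cast one_le_acf_succ h hx0 hx1 n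
    refine ⟨zero_le_one.trans ih.2, ?_⟩
    rw [qcf_add_two]
    push_cast
    nlinarith [ih.1, ih.2]

/-- `theta x n = θₙ₋₁`, the signed counterpart of `absθ`. -/
noncomputable def theta (x : ℝ) (n : ℕ) : ℝ := (qcf x n : ℝ) * x - (pcf x n : ℝ)

lemma absθ_eq_abs_theta (x : ℝ) (n : ℕ) : absθ x n = |theta x n| := rfl

lemma theta_zero (x : ℝ) : theta x 0 = -1 := by simp [theta, qcf, pcf, cf]

lemma theta_one (x : ℝ) : theta x 1 = x := by simp [theta, qcf, pcf, cf]

lemma theta_add_two (x : ℝ) (n : ℕ) :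
    theta x (n + 2) = (acf x (n + 1) : ℝ) * theta x (n + 1) + theta x n := by
  simp only [theta, qcf, pcf, cf, acf_succ]
  push_cast
  ring

lemma theta_succ {x : ℝ} (h : Irrational x) (n : ℕ) :
    theta x (n + 1) = -(gauss^[n] x) * theta x n := by
  induction n with
  | zero => simp [theta_zero, theta_one]
  | succ n ih =>
    have hne : gauss^[n] x ≠ 0 := (irrational_iterate_gauss h n).ne_zero
    have hstep : gauss^[n + 1] x = 1 / gauss^[n] x - (acf x (n + 1) : ℝ) := by
      rw [Function.iterate_succ_apply', gauss, Int.fract, acf_succ]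
    rw [theta_add_two, hstep, ih]
    field_simp
    ring

lemma qcf_mul_theta_sub_qcf_mul_theta (x : ℝ) (n : ℕ) :
    (qcf x (n + 1) : ℝ) * theta x n - (qcf x n : ℝ) * theta x (n + 1) = (-1) ^ (n + 1) := by
  induction n with
  | zero => simp [theta_zero, theta_one, qcf, cf]
  | succ n ih =>
    rw [qcf_add_two, theta_add_two, pow_succ]
    push_cast
    linear_combination (-1 : ℝ) * ih

lemma absθ_succ {x : ℝ} (h : Irrational x) (hx : 0 < x) (n : ℕ) :
    absθ x (n + 1) = gauss^[n] x * absθ x n := by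
  rw [absθ_eq_abs_theta, absθ_eq_abs_theta, theta_succ h, abs_mul, abs_neg,
    abs_of_pos (iterate_gauss_pos h hx n)]

lemma absθ_eq_one_div {x : ℝ} (h : Irrational x) (hx0 : 0 < x) (hx1 : x < 1) (n : ℕ) :
    absθ x n = 1 / (qcf x (n + 1) + gauss^[n] x * qcf x n) := by
  obtain ⟨hq0, hq1⟩ := qcf_nonneg_and_one_le_qcf_succ h hx0 hx1 n
  have hg := iterate_gauss_pos h hx0 n
  have hden : 0 < (qcf x (n + 1) : ℝ) + gauss^[n] x * qcf x n := by positivity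
  have hdet : ((qcf x (n + 1) : ℝ) + gauss^[n] x * qcf x n) * theta x n = (-1) ^ (n + 1) := by
    rw [← qcf_mul_theta_sub_qcf_mul_theta, theta_succ h]
    ring
  rw [eq_div_iff hden.ne', absθ_eq_abs_theta, mul_comm, ← abs_of_pos hden, ← abs_mul, hdet,
    abs_pow, abs_neg, abs_one, one_pow]

lemma absθ_pos {x : ℝ} (h : Irrational x) (hx0 : 0 < x) (hx1 : x < 1) (n : ℕ) :
    0 < absθ x n := by
  obtain ⟨hq0, hq1⟩ := qcf_nonneg_and_one_le_qcf_succ h hx0 hx1 n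
  have hg := iterate_gauss_pos h hx0 n
  rw [absθ_eq_one_div h hx0 hx1]
  positivity

lemma absθ_le_one_div_qcf {x : ℝ} (h : Irrational x) (hx0 : 0 < x) (hx1 : x < 1) (n : ℕ) :
    absθ x n ≤ 1 / qcf x (n + 1) := by
  obtain ⟨hq0, hq1⟩ := qcf_nonneg_and_one_le_qcf_succ h hx0 hx1 n
  rw [absθ_eq_one_div h hx0 hx1]
  gcongr
  exact le_add_of_nonneg_right (mul_nonneg (iterate_gauss_pos h hx0 n).le hq0)

lemma ost_of_ne_zero {p : ℝ × ℝ} (hp : p.1 ≠ 0) :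
    ost p = (gauss p.1, Int.fract (p.2 / p.1)) := by
  rw [ost, if_neg hp, gauss]

lemma mapsTo_ost_snd_mem_Ico : MapsTo ost {p | p.2 ∈ Ico 0 1} {p | p.2 ∈ Ico 0 1} := by
  intro p _
  unfold ost
  split_ifs
  · exact ⟨le_rfl, zero_lt_one⟩
  · exact ⟨Int.fract_nonneg _, Int.fract_lt_one _⟩

lemma iterate_ost_snd_mem_Ico {x y : ℝ} (hy : y ∈ Ico 0 1) (n : ℕ) :
    (ost^[n] (x, y)).2 ∈ Ico 0 1 :=
  mapsTo_ost_snd_mem_Ico.iterate n (show (x, y).2 ∈ Ico 0 1 from hy)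

lemma iterate_ost_fst {x : ℝ} (h : Irrational x) (y : ℝ) (n : ℕ) :
    (ost^[n] (x, y)).1 = gauss^[n] x := by
  induction n with
  | zero => rfl
  | succ n ih =>
    have hne : (ost^[n] (x, y)).1 ≠ 0 := ih ▸ (irrational_iterate_gauss h n).ne_zero
    rw [Function.iterate_succ_apply', Function.iterate_succ_apply', ost_of_ne_zero hne, ih]

lemma iterate_ost_snd_succ {x : ℝ} (h : Irrational x) (y : ℝ) (n : ℕ) :
    (ost^[n + 1] (x, y)).2 = (ost^[n] (x, y)).2 / gauss^[n] x - bdig x y n := by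
  have hfst := iterate_ost_fst h y n
  have hne : (ost^[n] (x, y)).1 ≠ 0 := hfst ▸ (irrational_iterate_gauss h n).ne_zero
  rw [Function.iterate_succ_apply', ost_of_ne_zero hne, bdig, hfst, Int.fract]

lemma sub_sum_bdig_mul_absθ {x : ℝ} (h : Irrational x) (hx : 0 < x) (y : ℝ) (n : ℕ) :
    y - ∑ i ∈ Finset.range n, (bdig x y i : ℝ) * absθ x (i + 1)
      = (ost^[n] (x, y)).2 * absθ x n := by
  induction n with
  | zero => simp [absθ, qcf, pcf, cf]
  | succ n ih =>
    have hne : gauss^[n] x ≠ 0 := (irrational_iterate_gauss h n).ne_zero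
    rw [Finset.sum_range_succ, ← sub_sub, ih, iterate_ost_snd_succ h, absθ_succ h hx]
    field_simp

/-- approximation identity for the Ostrowski expansion:
`y - ∑_{i=1}^n b_i |θ_{i-1}| = y_n |θ_{n-1}|`, and in particular this quantity
lies in `[0, 1/q_n)`. -/
theorem ostrowski_approximation (x y : ℝ) (hirr : Irrational x)
    (hx0 : 0 < x) (hx1 : x < 1) (hy0 : 0 ≤ y) (hy1 : y < 1) (n : ℕ) :
    y - (∑ i ∈ Finset.range n, (bdig x y i : ℝ) * absθ x (i + 1))
        = (ost^[n] (x, y)).2 * absθ x n ∧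
      0 ≤ y - (∑ i ∈ Finset.range n, (bdig x y i : ℝ) * absθ x (i + 1)) ∧
      y - (∑ i ∈ Finset.range n, (bdig x y i : ℝ) * absθ x (i + 1))
        < 1 / (qcf x (n + 1) : ℝ) := by
  have hid := sub_sum_bdig_mul_absθ hirr hx0 y n
  obtain ⟨hyn0, hyn1⟩ := iterate_ost_snd_mem_Ico (x := x) ⟨hy0, hy1⟩ n
  have hθ := absθ_pos hirr hx0 hx1 n
  refine ⟨hid, hid ▸ mul_nonneg hyn0 hθ.le, ?_⟩
  calc _ = (ost^[n] (x, y)).2 * absθ x n := hid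
    _ < absθ x n := mul_lt_of_lt_one_left hθ hyn1
    _ ≤ 1 / qcf x (n + 1) := absθ_le_one_div_qcf hirr hx0 hx1 n
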